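/- arXiv:2401.06405 — 5 statements merged into one kernel-verified Lean document; each statement's English description precedes it below -/
import Mathlib

section
/- Let n ≥ 2 and S ⊆ ℤ^n. Then S is representable by a UTVPI system if and only if S is closed under the directed discrete midpoint operation μ and under the median operation. -/
/-- Componentwise closedness of a set of `ι`-indexed integer vectors under a
`k`-ary operation `f : ℤ^k → ℤ`. -/
def CptClosed {k : ℕ} {ι : Type*} (f : (Fin k → ℤ) → ℤ) (S : Set (ι → ℤ)) : Prop :=
  ∀ x : Fin k → ι → ℤ, (∀ l, x l ∈ S) → (fun i => f (fun l => x l i)) ∈ S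

/-- `f : ℤ³ → ℤ` is a majority operation. -/
def IsMajorityOp (f : (Fin 3 → ℤ) → ℤ) : Prop :=
  ∀ a b : ℤ, f ![a, a, b] = a ∧ f ![a, b, a] = a ∧ f ![b, a, a] = a

/-- `S` is closed under some majority operation. -/
def MajClosed {ι : Type*} (S : Set (ι → ℤ)) : Prop :=
  ∃ f : (Fin 3 → ℤ) → ℤ, IsMajorityOp f ∧ CptClosed f S

/-- The projection `π_{i,j}(x) = (x_i, x_j)`. -/
def proj2 {n : ℕ} (i j : Fin n) (x : Fin n → ℤ) : Fin 2 → ℤ := ![x i, x j]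

/-- The projection `π_{i,j}(S)`. -/
def projSet {n : ℕ} (i j : Fin n) (S : Set (Fin n → ℤ)) : Set (Fin 2 → ℤ) :=
  proj2 i j '' S

/-- The join `⋈_{1 ≤ i < j ≤ n} F i j`. -/
def joinPairs {n : ℕ} (F : Fin n → Fin n → Set (Fin 2 → ℤ)) : Set (Fin n → ℤ) :=
  {x | ∀ i j : Fin n, i < j → proj2 i j x ∈ F i j}

/-- The `f`-closure of `S`: the intersection of all `f`-closed supersets of `S`. -/
def clOp {k m : ℕ} (f : (Fin k → ℤ) → ℤ) (S : Set (Fin m → ℤ)) : Set (Fin m → ℤ) :=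
  ⋂₀ {T | S ⊆ T ∧ CptClosed f T}

/-- The directed discrete midpoint operation `μ`. -/
def muOp : (Fin 2 → ℤ) → ℤ := fun t =>
  if t 1 ≤ t 0 then ⌈((t 0 + t 1 : ℤ) : ℚ) / 2⌉ else ⌊((t 0 + t 1 : ℤ) : ℚ) / 2⌋

/-- The operation `g(x,y) = ⌈(x+y)/2⌉`. -/
def ceilAvgOp : (Fin 2 → ℤ) → ℤ := fun t => ⌈((t 0 + t 1 : ℤ) : ℚ) / 2⌉

/-- The operation `h(x,y) = ⌊(x+y)/2⌋`. -/
def floorAvgOp : (Fin 2 → ℤ) → ℤ := fun t => ⌊((t 0 + t 1 : ℤ) : ℚ) / 2⌋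

/-- The median operation on three integers. -/
def medianOp : (Fin 3 → ℤ) → ℤ := fun t =>
  max (max (min (t 0) (t 1)) (min (t 1) (t 2))) (min (t 0) (t 2))

/-- The canonical embedding `ℤ^m → ℝ^m`. -/
def toR {m : ℕ} (z : Fin m → ℤ) : Fin m → ℝ := fun l => (z l : ℝ)

/-- The integer neighborhood `N(x)` of a real vector `x`. -/
def intNbhd {m : ℕ} (x : Fin m → ℝ) : Set (Fin m → ℤ) :=
  {z | ∀ j, |(z j : ℝ) - x j| < 1}

/-- `S` is midpoint-neighbor-closed: for all `x, y ∈ S`, `N((x+y)/2) ⊆ S`. -/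
def MidpointNeighborClosed {m : ℕ} (S : Set (Fin m → ℤ)) : Prop :=
  ∀ x ∈ S, ∀ y ∈ S, ∀ z : Fin m → ℤ,
    (∀ j, |(z j : ℝ) - ((x j : ℝ) + (y j : ℝ)) / 2| < 1) → z ∈ S

/-- `S ⊆ ℤ^m` is integrally convex. -/
def IntegrallyConvex {m : ℕ} (S : Set (Fin m → ℤ)) : Prop :=
  ∀ x : Fin m → ℝ, x ∈ convexHull ℝ (toR '' S) →
    x ∈ convexHull ℝ (toR '' (S ∩ intNbhd x))

/-- The closed convex closure of `T ⊆ ℤ^m` inside `ℝ^m`: the intersection of all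
topologically closed convex sets containing `T`. -/
def closedConvexClosure {m : ℕ} (T : Set (Fin m → ℤ)) : Set (Fin m → ℝ) :=
  ⋂₀ {C : Set (Fin m → ℝ) | Convex ℝ C ∧ IsClosed C ∧ toR '' T ⊆ C}

/-- `S = cl_conv̄(S) ∩ ℤ^m`. -/
def ClosedConvexIntegral {m : ℕ} (S : Set (Fin m → ℤ)) : Prop :=
  S = {z : Fin m → ℤ | toR z ∈ closedConvexClosure S}

/-- All entries of `A` lie in `{0, -1, +1}`. -/
def UnitMatrix {mR n : ℕ} (A : Matrix (Fin mR) (Fin n) ℤ) : Prop :=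
  ∀ i j, A i j = 0 ∨ A i j = -1 ∨ A i j = 1

/-- Each row of `A` has at most `c` nonzero entries. -/
def RowSupportLE {mR n : ℕ} (A : Matrix (Fin mR) (Fin n) ℤ) (c : ℕ) : Prop :=
  ∀ i, {j | A i j ≠ 0}.ncard ≤ c

/-- `S` is representable by a UTVPI system. -/
def RepUTVPI {n : ℕ} (S : Set (Fin n → ℤ)) : Prop :=
  ∃ (mR : ℕ) (A : Matrix (Fin mR) (Fin n) ℤ) (b : Fin mR → ℝ),
    UnitMatrix A ∧ RowSupportLE A 2 ∧
    S = {x | ∀ i, b i ≤ ((∑ j, A i j * x j : ℤ) : ℝ)}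

/-- `S` is representable by an SVPI system. -/
def RepSVPI {n : ℕ} (S : Set (Fin n → ℤ)) : Prop :=
  ∃ (mR : ℕ) (A : Matrix (Fin mR) (Fin n) ℤ) (b : Fin mR → ℝ),
    UnitMatrix A ∧ RowSupportLE A 1 ∧
    S = {x | ∀ i, b i ≤ ((∑ j, A i j * x j : ℤ) : ℝ)}

/-- `S` is representable by a DC system. -/
def RepDC {n : ℕ} (S : Set (Fin n → ℤ)) : Prop :=
  ∃ (mR : ℕ) (A : Matrix (Fin mR) (Fin n) ℤ) (b : Fin mR → ℝ),
    UnitMatrix A ∧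
    (∀ i, {j | A i j = 1}.ncard ≤ 1) ∧ (∀ i, {j | A i j = -1}.ncard ≤ 1) ∧
    S = {x | ∀ i, b i ≤ ((∑ j, A i j * x j : ℤ) : ℝ)}

/-- `S` is representable by a TVPI system with possibly infinitely many inequalities. -/
def RepTVPIInf {n : ℕ} (S : Set (Fin n → ℤ)) : Prop :=
  ∃ (I : Type) (a1 a2 b : I → ℝ) (p q : I → Fin n),
    S = {x | ∀ i : I, b i ≤ a1 i * (x (p i) : ℝ) + a2 i * (x (q i) : ℝ)}

/-- `S` is 2-decomposable: `S = ⋈_{i<j} π_{i,j}(S)`. -/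
def TwoDecomposable {ι : Type*} [LinearOrder ι] (S : Set (ι → ℤ)) : Prop :=
  S = {x | ∀ i j : ι, i < j → ∃ s ∈ S, s i = x i ∧ s j = x j}

/-!
A unit inequality involves at most two coordinates, and on two coordinates `μ` and the median
never push a form `c * p + d * q` (`c, d ∈ {0, ±1}`) below the least of its values at the
arguments: this gives closedness of UTVPI sets.

Conversely, `S` is cut out by all unit two-variable inequalities valid on it. For a point `x`
satisfying them, closedness under the majority operation `median` (Baker–Pixley) reduces
`x ∈ S` to the projections of `S` onto pairs of coordinates, so it suffices that a `μ`-closed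
`T ⊆ ℤ²` contains every integer point `z` of its octagonal hull. A `μ`-closed subset of `ℤ` is
an interval, so `T` meets the row and the column through `z`; if `z ∉ T`, after reflecting,
it meets both only on their positive sides. The leftmost points of adjacent rows of `T` differ
by at most one (`μ` of a leftmost point and a point of the next row stays in the row), so
`T ⊆ {p₁ + |p₂| > 0}`, symmetrically `T ⊆ {p₂ + |p₁| > 0}`, hence `T ⊆ {p₁ + p₂ > 0}`,
contradicting the octagon inequality in the direction `(1, 1)`.
-/

def mid (s t : ℤ) : ℤ := muOp ![s, t]

lemma mid_eq (s t : ℤ) : mid s t = if t ≤ s then -(-(s + t) / 2) else (s + t) / 2 := by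
  have hc := Rat.ceil_intCast_div_natCast (s + t) 2
  have hf := Rat.floor_intCast_div_natCast (s + t) 2
  push_cast at hc hf
  by_cases h : t ≤ s <;> simp [mid, muOp, h, hc, hf]

lemma mid_spec (s t : ℤ) :
    (t ≤ s ∧ s + t ≤ 2 * mid s t ∧ 2 * mid s t ≤ s + t + 1) ∨
    (s < t ∧ s + t - 1 ≤ 2 * mid s t ∧ 2 * mid s t ≤ s + t) := by
  rw [mid_eq]; split_ifs <;> omega

lemma mid_self (s : ℤ) : mid s s = s := by
  have := mid_spec s s; omega

lemma mid_succ_right (s : ℤ) : mid s (s + 1) = s := by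
  have := mid_spec s (s + 1); omega

lemma mid_mul_add {ε : ℤ} (hε : ε = 1 ∨ ε = -1) (s t z : ℤ) :
    mid (ε * s + z) (ε * t + z) = ε * mid s t + z := by
  have h₁ := mid_spec (ε * s + z) (ε * t + z)
  have h₂ := mid_spec s t
  rcases hε with rfl | rfl <;> omega

lemma mid_add (s t z : ℤ) : mid (s + z) (t + z) = mid s t + z := by
  simpa using mid_mul_add (Or.inl rfl) s t z

/-- Applied componentwise to the `k` points `(u l, v l)` of `ℤ²`, `f` preserves every half-plane
`β ≤ c * p + d * q` with `c, d ∈ {0, -1, 1}`. -/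
def PreservesUnitHalfplanes {k : ℕ} (f : (Fin k → ℤ) → ℤ) : Prop :=
  ∀ c d β : ℤ, (c = 0 ∨ c = -1 ∨ c = 1) → (d = 0 ∨ d = -1 ∨ d = 1) →
    ∀ u v : Fin k → ℤ, (∀ l, β ≤ c * u l + d * v l) → β ≤ c * f u + d * f v

lemma preservesUnitHalfplanes_muOp : PreservesUnitHalfplanes muOp := by
  intro c d β hc hd u v h
  have h0 := h 0
  have h1 := h 1
  have hu := mid_spec (u 0) (u 1)
  have hv := mid_spec (v 0) (v 1)
  change β ≤ c * mid (u 0) (u 1) + d * mid (v 0) (v 1)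
  rcases hc with rfl | rfl | rfl <;> rcases hd with rfl | rfl | rfl <;> omega

lemma preservesUnitHalfplanes_medianOp : PreservesUnitHalfplanes medianOp := by
  intro c d β hc hd u v h
  have h0 := h 0
  have h1 := h 1
  have h2 := h 2
  simp only [medianOp]
  rcases hc with rfl | rfl | rfl <;> rcases hd with rfl | rfl | rfl <;> omega

lemma eq_zero_or_exists_dotProduct_eq {n : ℕ} {a : Fin n → ℤ}
    (ha : ∀ j, a j = 0 ∨ a j = -1 ∨ a j = 1) (h2 : {j | a j ≠ 0}.ncard ≤ 2) :
    a = 0 ∨ ∃ (p q : Fin n) (c d : ℤ), (c = 0 ∨ c = -1 ∨ c = 1) ∧ (d = 0 ∨ d = -1 ∨ d = 1) ∧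
      ∀ v, a ⬝ᵥ v = c * v p + d * v q := by
  classical
  set s := Finset.univ.filter (a · ≠ 0) with hs
  have hcard : s.card ≤ 2 := by
    rwa [← Set.ncard_coe_finset, hs, Finset.coe_filter_univ]
  have hzero : ∀ j ∉ s, a j = 0 := by simp [hs]
  have hdot : ∀ v, a ⬝ᵥ v = ∑ j ∈ s, a j * v j := fun v =>
    (Finset.sum_subset (Finset.subset_univ s) fun j _ hj => by simp [hzero j hj]).symm
  interval_cases h : s.card
  · left
    ext j
    exact hzero j (by simp [Finset.card_eq_zero.mp h])
  · obtain ⟨p, hp⟩ := Finset.card_eq_one.mp h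
    exact Or.inr ⟨p, p, a p, 0, ha p, Or.inl rfl, fun v => by simp [hdot, hp]⟩
  · obtain ⟨p, q, hpq, hpq'⟩ := Finset.card_eq_two.mp h
    exact Or.inr ⟨p, q, a p, a q, ha p, ha q, fun v => by simp [hdot, hpq', hpq]⟩

lemma cptClosed_of_preservesUnitHalfplanes {k mR n : ℕ} {f : (Fin k → ℤ) → ℤ}
    (hf : PreservesUnitHalfplanes f) {A : Matrix (Fin mR) (Fin n) ℤ} (hA : UnitMatrix A)
    (h2 : RowSupportLE A 2) (b : Fin mR → ℝ) :
    CptClosed f {x | ∀ i, b i ≤ ((∑ j, A i j * x j : ℤ) : ℝ)} := by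
  intro x hx r
  suffices ∀ β : ℤ, (∀ l, β ≤ A r ⬝ᵥ x l) → β ≤ A r ⬝ᵥ fun j => f fun l => x l j by
    exact Int.ceil_le.mp (this _ fun l => Int.ceil_le.mpr (hx l r))
  intro β hβ
  rcases eq_zero_or_exists_dotProduct_eq (hA r) (h2 r) with h0 | ⟨p, q, c, d, hc, hd, hdot⟩
  · simp only [h0, zero_dotProduct] at hβ ⊢
    simpa using hf 0 0 β (Or.inl rfl) (Or.inl rfl) 0 0 (by simpa using hβ)
  · simp only [hdot] at hβ ⊢
    exact hf c d β hc hd (fun l => x l p) (fun l => x l q) hβ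

lemma ordConnected_of_mid_mem {U : Set ℤ} (hU : ∀ s ∈ U, ∀ t ∈ U, mid s t ∈ U) :
    U.OrdConnected := by
  refine ⟨fun a ha c hc t ht => ?_⟩
  obtain ⟨N, hN⟩ : ∃ N : ℕ, c - a ≤ N := ⟨(c - a).toNat, Int.self_le_toNat _⟩
  induction N generalizing a c with
  | zero =>
    obtain rfl : t = a := by grind
    exact ha
  | succ N ih =>
    obtain rfl | hat := eq_or_lt_of_le ht.1
    · exact ha
    obtain rfl | htc := eq_or_lt_of_le ht.2
    · exact hc
    -- `mid a c` lies strictly between `a` and `c`, so one of the two halves contains `t`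
    have hm := mid_spec a c
    rcases le_or_gt t (mid a c) with h | h
    · exact ih _ ha _ (hU a ha c hc) ⟨ht.1, h⟩ (by omega)
    · exact ih _ (hU a ha c hc) _ hc ⟨h.le, ht.2⟩ (by omega)

lemma exists_sign_of_zero_notMem {U : Set ℤ} (hU : U.OrdConnected) (h0 : 0 ∉ U) :
    ∃ ε : ℤ, (ε = 1 ∨ ε = -1) ∧ ∀ t ∈ U, 0 < ε * t := by
  by_cases hneg : ∃ t₀ ∈ U, t₀ < 0
  · obtain ⟨t₀, ht₀, ht₀'⟩ := hneg
    refine ⟨-1, Or.inr rfl, fun t ht => ?_⟩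
    have : t < 0 := by
      by_contra! h
      exact h0 (hU.out ht₀ ht ⟨ht₀'.le, h⟩)
    omega
  · push Not at hneg
    exact ⟨1, Or.inl rfl, fun t ht => by have := hneg t ht; grind⟩

def MidClosed (T : Set (ℤ × ℤ)) : Prop :=
  ∀ p ∈ T, ∀ q ∈ T, (mid p.1 q.1, mid p.2 q.2) ∈ T

namespace MidClosed

variable {T : Set (ℤ × ℤ)}

lemma ordConnected_snd (hT : MidClosed T) : (Prod.snd '' T).OrdConnected :=
  ordConnected_of_mid_mem <| by
    rintro _ ⟨p, hp, rfl⟩ _ ⟨q, hq, rfl⟩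
    exact ⟨_, hT p hp q hq, rfl⟩

lemma exists_mem_row (hT : MidClosed T) {k : ℤ} (h₁ : ∃ w ∈ T, w.2 ≤ k)
    (h₂ : ∃ w ∈ T, k ≤ w.2) : ∃ x, (x, k) ∈ T := by
  obtain ⟨w, hw, hwk⟩ := h₁
  obtain ⟨w', hw', hkw⟩ := h₂
  obtain ⟨p, hp, rfl⟩ := hT.ordConnected_snd.out ⟨w, hw, rfl⟩ ⟨w', hw', rfl⟩ ⟨hwk, hkw⟩
  exact ⟨p.1, hp⟩

lemma preimage_swap (hT : MidClosed T) : MidClosed (Prod.swap ⁻¹' T) :=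
  fun _ hp _ hq => hT _ hp _ hq

lemma preimage_affine (hT : MidClosed T) {ε₁ ε₂ : ℤ} (hε₁ : ε₁ = 1 ∨ ε₁ = -1)
    (hε₂ : ε₂ = 1 ∨ ε₂ = -1) (z : ℤ × ℤ) :
    MidClosed {p | (ε₁ * p.1 + z.1, ε₂ * p.2 + z.2) ∈ T} := by
  intro p hp q hq
  have := hT _ hp _ hq
  rwa [mid_mul_add hε₁, mid_mul_add hε₂] at this

lemma sub_one_le_of_isLeast_row (hT : MidClosed T) {b k t : ℤ} (hb : (b, k) ∈ T)
    (hmin : ∀ x, (x, k) ∈ T → b ≤ x) (ht : (t, k + 1) ∈ T) : b - 1 ≤ t := by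
  have h := hmin _ (by simpa only [mid_succ_right] using hT _ hb _ ht)
  have := mid_spec b t
  omega

lemma pos_add_of_row_zero_pos (hT : MidClosed T) (hne : ∃ x, (x, 0) ∈ T)
    (hpos : ∀ x, (x, 0) ∈ T → 0 < x) : ∀ t ∈ T, 0 ≤ t.2 → 0 < t.1 + t.2 := by
  suffices ∀ k : ℕ, ∀ x, (x, (k : ℤ)) ∈ T → 0 < x + k by
    rintro ⟨x, y⟩ ht hy
    lift y to ℕ using hy
    exact this y x ht
  intro k
  induction k with
  | zero => simpa using hpos
  | succ k ih =>
    intro x hx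
    obtain ⟨x₀, hx₀⟩ := hne
    obtain ⟨x', hk⟩ := hT.exists_mem_row (k := k) ⟨_, hx₀, Int.natCast_nonneg k⟩
      ⟨_, hx, by push_cast; omega⟩
    -- the row `k` is bounded below by `ih`, so it has a leftmost point
    obtain ⟨b, hb, hmin⟩ := Int.exists_least_of_bdd (P := fun x => (x, (k : ℤ)) ∈ T)
      ⟨-k, fun x hx => by have := ih x hx; omega⟩ ⟨x', hk⟩
    have := hT.sub_one_le_of_isLeast_row hb hmin (by exact_mod_cast hx)
    have := ih b hb
    push_cast
    omega

lemma pos_add_abs_of_row_zero_pos (hT : MidClosed T) (hne : ∃ x, (x, 0) ∈ T)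
    (hpos : ∀ x, (x, 0) ∈ T → 0 < x) : ∀ t ∈ T, 0 < t.1 + |t.2| := by
  rintro ⟨x, y⟩ ht
  rcases le_or_gt 0 y with hy | hy
  · simpa [abs_of_nonneg hy] using hT.pos_add_of_row_zero_pos hne hpos _ ht hy
  · have hT' := hT.preimage_affine (Or.inl rfl) (Or.inr rfl) 0
    have := hT'.pos_add_of_row_zero_pos (by simpa using hne) (by simpa using hpos) (x, -y)
      (by simpa using ht) (by simp; omega)
    simpa [abs_of_neg hy] using this

lemma pos_add_of_axes_pos (hT : MidClosed T) (hrow : ∃ x, (x, 0) ∈ T)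
    (hrow_pos : ∀ x, (x, 0) ∈ T → 0 < x) (hcol : ∃ y, (0, y) ∈ T)
    (hcol_pos : ∀ y, (0, y) ∈ T → 0 < y) : ∀ t ∈ T, 0 < t.1 + t.2 := by
  intro t ht
  have h₁ := hT.pos_add_abs_of_row_zero_pos hrow hrow_pos t ht
  have h₂ := hT.preimage_swap.pos_add_abs_of_row_zero_pos hcol hcol_pos t.swap ht
  simp only [Prod.fst_swap, Prod.snd_swap] at h₂
  cases abs_cases t.1 <;> cases abs_cases t.2 <;> linarith

lemma exists_row_sign (hT : MidClosed T) {z : ℤ × ℤ} (hz : z ∉ T) :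
    ∃ ε : ℤ, (ε = 1 ∨ ε = -1) ∧ ∀ x, (x, z.2) ∈ T → 0 < ε * (x - z.1) := by
  have hU : ({x | (x + z.1, z.2) ∈ T} : Set ℤ).OrdConnected := by
    refine ordConnected_of_mid_mem fun s hs t ht => ?_
    simpa [mid_add, mid_self] using hT _ hs _ ht
  obtain ⟨ε, hε, h⟩ := exists_sign_of_zero_notMem hU (by simpa using hz)
  exact ⟨ε, hε, fun x hx => h (x - z.1) (by simpa using hx)⟩

lemma sign_add_sign_pos (hT : MidClosed T) {z : ℤ × ℤ} {ε₁ ε₂ : ℤ} (hε₁ : ε₁ = 1 ∨ ε₁ = -1)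
    (hε₂ : ε₂ = 1 ∨ ε₂ = -1) (hrow : ∃ x, (x, z.2) ∈ T)
    (hrow_sign : ∀ x, (x, z.2) ∈ T → 0 < ε₁ * (x - z.1)) (hcol : ∃ y, (z.1, y) ∈ T)
    (hcol_sign : ∀ y, (z.1, y) ∈ T → 0 < ε₂ * (y - z.2)) :
    ∀ w ∈ T, 0 < ε₁ * (w.1 - z.1) + ε₂ * (w.2 - z.2) := by
  have hinv : ∀ ε : ℤ, (ε = 1 ∨ ε = -1) → ∀ a b : ℤ, ε * (ε * (a - b)) + b = a := by
    rintro _ (rfl | rfl) a b <;> ring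
  have hinv' : ∀ ε : ℤ, (ε = 1 ∨ ε = -1) → ∀ a b : ℤ, ε * (ε * a + b - b) = a := by
    rintro _ (rfl | rfl) a b <;> ring
  intro w hw
  refine (hT.preimage_affine hε₁ hε₂ z).pos_add_of_axes_pos ?_ ?_ ?_ ?_
    (ε₁ * (w.1 - z.1), ε₂ * (w.2 - z.2)) (show (_, _) ∈ T by rwa [hinv _ hε₁, hinv _ hε₂])
  · obtain ⟨x, hx⟩ := hrow
    exact ⟨ε₁ * (x - z.1), show (_, _) ∈ T by rwa [hinv _ hε₁, mul_zero, zero_add]⟩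
  · intro x hx
    simpa only [hinv' _ hε₁] using hrow_sign (ε₁ * x + z.1) (by simpa using hx)
  · obtain ⟨y, hy⟩ := hcol
    exact ⟨ε₂ * (y - z.2), show (_, _) ∈ T by rwa [hinv _ hε₂, mul_zero, zero_add]⟩
  · intro y hy
    simpa only [hinv' _ hε₂] using hcol_sign (ε₂ * y + z.2) (by simpa using hy)

theorem mem_of_octagon (hT : MidClosed T) (z : ℤ × ℤ)
    (h : ∀ c d : ℤ, (c = 0 ∨ c = -1 ∨ c = 1) → (d = 0 ∨ d = -1 ∨ d = 1) →
      ∃ w ∈ T, c * w.1 + d * w.2 ≤ c * z.1 + d * z.2) : z ∈ T := by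
  by_contra hz
  obtain ⟨w₁, hw₁, h₁⟩ := h 0 1 (by simp) (by simp)
  obtain ⟨w₂, hw₂, h₂⟩ := h 0 (-1) (by simp) (by simp)
  obtain ⟨w₃, hw₃, h₃⟩ := h 1 0 (by simp) (by simp)
  obtain ⟨w₄, hw₄, h₄⟩ := h (-1) 0 (by simp) (by simp)
  have hrow := hT.exists_mem_row (k := z.2) ⟨w₁, hw₁, by linarith⟩ ⟨w₂, hw₂, by linarith⟩
  have hcol := hT.preimage_swap.exists_mem_row (k := z.1) ⟨w₃.swap, hw₃, by simp; linarith⟩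
    ⟨w₄.swap, hw₄, by simp; linarith⟩
  -- reflect through `z` so that `T` meets both axis lines on their positive sides
  obtain ⟨ε₁, hε₁, hrow_sign⟩ := hT.exists_row_sign hz
  obtain ⟨ε₂, hε₂, hcol_sign⟩ := hT.preimage_swap.exists_row_sign (z := z.swap) hz
  obtain ⟨w, hw, hw'⟩ := h ε₁ ε₂ (by omega) (by omega)
  have := hT.sign_add_sign_pos hε₁ hε₂ hrow hrow_sign hcol (fun y hy => hcol_sign y hy) w hw
  linarith

end MidClosed

lemma isMajorityOp_medianOp : IsMajorityOp medianOp := by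
  intro a b
  simp only [medianOp, Matrix.cons_val_zero, Matrix.cons_val_one, Matrix.cons_val_two,
    Matrix.head_cons, Matrix.tail_cons]
  omega

lemma IsMajorityOp.apply_eq {f : (Fin 3 → ℤ) → ℤ} (hf : IsMajorityOp f) {p q r y : ℤ}
    (h : p = y ∧ q = y ∨ p = y ∧ r = y ∨ q = y ∧ r = y) : f ![p, q, r] = y := by
  rcases h with ⟨rfl, rfl⟩ | ⟨rfl, rfl⟩ | ⟨rfl, rfl⟩
  exacts [(hf _ _).1, (hf _ _).2.1, (hf _ _).2.2]

section CptClosed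

variable {ι : Type*} {S : Set (ι → ℤ)} {u v w : ι → ℤ}

lemma CptClosed.apply_two_mem {f : (Fin 2 → ℤ) → ℤ} (hS : CptClosed f S) (hu : u ∈ S)
    (hv : v ∈ S) : (fun i => f ![u i, v i]) ∈ S := by
  convert hS ![u, v] (by simp [Fin.forall_fin_two, hu, hv]) using 3 with i
  ext l
  fin_cases l <;> rfl

lemma CptClosed.apply_three_mem {f : (Fin 3 → ℤ) → ℤ} (hS : CptClosed f S) (hu : u ∈ S)
    (hv : v ∈ S) (hw : w ∈ S) : (fun i => f ![u i, v i, w i]) ∈ S := by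
  convert hS ![u, v, w] (by simp [Fin.forall_fin_succ, hu, hv, hw]) using 3 with i
  ext l
  fin_cases l <;> rfl

end CptClosed

/-- The Baker–Pixley theorem. -/
theorem MajClosed.mem_of_forall_pair {ι : Type*} [Finite ι] {S : Set (ι → ℤ)}
    (hS : MajClosed S) (hne : S.Nonempty) {x : ι → ℤ}
    (h : ∀ i j, ∃ s ∈ S, s i = x i ∧ s j = x j) : x ∈ S := by
  classical
  obtain ⟨f, hf, hfS⟩ := hS
  have agree : ∀ (J : Finset ι) (i j : ι),
      ∃ s ∈ S, s i = x i ∧ s j = x j ∧ ∀ l ∈ J, s l = x l := by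
    intro J
    induction J using Finset.induction_on with
    | empty => simpa using h
    | insert a J _ ih =>
      intro i j
      obtain ⟨s₁, hs₁, h₁i, h₁j, h₁J⟩ := ih i j
      obtain ⟨s₂, hs₂, h₂a, h₂j, h₂J⟩ := ih a j
      obtain ⟨s₃, hs₃, h₃a, h₃i, h₃J⟩ := ih a i
      -- on `J ∪ {a, i, j}`, at least two of `s₁, s₂, s₃` agree with `x` at each coordinate
      refine ⟨_, hfS.apply_three_mem hs₁ hs₂ hs₃, hf.apply_eq (Or.inr (Or.inl ⟨h₁i, h₃i⟩)),
        hf.apply_eq (Or.inl ⟨h₁j, h₂j⟩), ?_⟩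
      simp only [Finset.forall_mem_insert]
      exact ⟨hf.apply_eq (Or.inr (Or.inr ⟨h₂a, h₃a⟩)),
        fun l hl => hf.apply_eq (Or.inl ⟨h₁J l hl, h₂J l hl⟩)⟩
  cases isEmpty_or_nonempty ι with
  | inl =>
    obtain ⟨s, hs⟩ := hne
    rwa [Subsingleton.elim x s]
  | inr hι =>
    obtain ⟨i⟩ := hι
    have := Fintype.ofFinite ι
    obtain ⟨s, hs, -, -, hsx⟩ := agree Finset.univ i i
    rwa [← funext fun l => hsx l (Finset.mem_univ l)]

def unitQuadRows (n : ℕ) : Set (Fin n → ℤ) :=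
  {a | (∀ j, a j = 0 ∨ a j = -1 ∨ a j = 1) ∧ {j | a j ≠ 0}.ncard ≤ 2}

section UTVPI

variable {n : ℕ}

lemma finite_unitQuadRows : (unitQuadRows n).Finite :=
  (Set.Finite.pi fun _ => Set.toFinite ({0, -1, 1} : Set ℤ)).subset fun a ha j _ => by
    rcases ha.1 j with h | h | h <;> simp [h]

lemma single_add_single_mem_unitQuadRows {i j : Fin n} {c d : ℤ}
    (hc : c = 0 ∨ c = -1 ∨ c = 1) (hd : d = 0 ∨ d = -1 ∨ d = 1) (hij : i ≠ j ∨ d = 0) :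
    Pi.single i c + Pi.single j d ∈ unitQuadRows n := by
  refine ⟨fun l => ?_, ?_⟩
  · rcases eq_or_ne l i with rfl | hli <;> rcases eq_or_ne l j with rfl | hlj
    · obtain rfl : d = 0 := hij.resolve_left (not_not.mpr rfl)
      simpa using hc
    all_goals simp [*]
  · calc {l | (Pi.single i c + Pi.single j d : Fin n → ℤ) l ≠ 0}.ncard
        ≤ ({i, j} : Set (Fin n)).ncard := Set.ncard_le_ncard fun l hl => by
          by_contra h
          simp_all [Pi.single_apply]
      _ ≤ 2 := (Set.ncard_insert_le _ _).trans (by simp)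

lemma repUTVPI_of_forall_exists_le {S : Set (Fin n → ℤ)}
    (h : ∀ x, (∀ a ∈ unitQuadRows n, ∃ s ∈ S, a ⬝ᵥ s ≤ a ⬝ᵥ x) → x ∈ S) : RepUTVPI S := by
  rcases S.eq_empty_or_nonempty with rfl | hne
  · exact ⟨1, 0, 1, fun _ _ => Or.inl rfl, fun _ => by simp, by ext; simp⟩
  -- one row for each unit quadratic form bounded below on `S`, with its infimum as right-hand side
  obtain ⟨mR, A, hA⟩ := (finite_unitQuadRows.subset
    (Set.sep_subset _ fun a => BddBelow ((a ⬝ᵥ ·) '' S))).fin_embedding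
  have hrow (r : Fin mR) : A r ∈ unitQuadRows n ∧ BddBelow ((A r ⬝ᵥ ·) '' S) := by
    have := Set.mem_range_self (f := A) r
    rwa [hA] at this
  refine ⟨mR, fun r => A r, fun r => (sInf ((A r ⬝ᵥ ·) '' S) : ℤ), fun r => (hrow r).1.1,
    fun r => (hrow r).1.2, Set.Subset.antisymm (fun x hx r => ?_) (fun x hx => h x ?_)⟩
  · exact Int.cast_le.mpr (csInf_le (hrow r).2 ⟨x, hx, rfl⟩)
  intro a ha
  by_cases hbdd : BddBelow ((a ⬝ᵥ ·) '' S)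
  · obtain ⟨r, rfl⟩ : a ∈ Set.range A := hA ▸ ⟨ha, hbdd⟩
    obtain ⟨s, hs, hs'⟩ := Int.csInf_mem (hne.image _) hbdd
    exact ⟨s, hs, hs'.le.trans (Int.cast_le.mp (hx r))⟩
  · obtain ⟨_, ⟨s, hs, rfl⟩, hlt⟩ := not_bddBelow_iff.mp hbdd (a ⬝ᵥ x)
    exact ⟨s, hs, hlt.le⟩

lemma mem_of_forall_exists_le {S : Set (Fin n → ℤ)} (hmu : CptClosed muOp S)
    (hmed : CptClosed medianOp S) {x : Fin n → ℤ}
    (hx : ∀ a ∈ unitQuadRows n, ∃ s ∈ S, a ⬝ᵥ s ≤ a ⬝ᵥ x) : x ∈ S := by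
  have hpair (i j : Fin n) (c d : ℤ) (hc : c = 0 ∨ c = -1 ∨ c = 1) (hd : d = 0 ∨ d = -1 ∨ d = 1)
      (hij : i ≠ j ∨ d = 0) : ∃ s ∈ S, c * s i + d * s j ≤ c * x i + d * x j := by
    simpa [add_dotProduct, single_dotProduct] using
      hx _ (single_add_single_mem_unitQuadRows hc hd hij)
  obtain ⟨s₀, hs₀, -⟩ := hx 0 ⟨fun _ => Or.inl rfl, by simp⟩
  refine MajClosed.mem_of_forall_pair ⟨medianOp, isMajorityOp_medianOp, hmed⟩ ⟨s₀, hs₀⟩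
    fun i j => ?_
  rcases eq_or_ne i j with rfl | hij
  · have hU : ((· i) '' S).OrdConnected := ordConnected_of_mid_mem <| by
      rintro _ ⟨u, hu, rfl⟩ _ ⟨v, hv, rfl⟩
      exact ⟨_, hmu.apply_two_mem hu hv, rfl⟩
    obtain ⟨s, hs, hsx⟩ := hpair i i 1 0 (by simp) (by simp) (Or.inr rfl)
    obtain ⟨s', hs', hs'x⟩ := hpair i i (-1) 0 (by simp) (by simp) (Or.inr rfl)
    obtain ⟨t, ht, hti⟩ := hU.out ⟨s, hs, rfl⟩ ⟨s', hs', rfl⟩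
      (show x i ∈ Set.Icc (s i) (s' i) from ⟨by linarith, by linarith⟩)
    exact ⟨t, ht, hti, hti⟩
  · have hT : MidClosed ((fun s => (s i, s j)) '' S) := by
      rintro _ ⟨u, hu, rfl⟩ _ ⟨v, hv, rfl⟩
      exact ⟨_, hmu.apply_two_mem hu hv, rfl⟩
    obtain ⟨s, hs, hsx⟩ := hT.mem_of_octagon (x i, x j) fun c d hc hd => by
      obtain ⟨s, hs, hle⟩ := hpair i j c d hc hd (Or.inl hij)
      exact ⟨_, ⟨s, hs, rfl⟩, hle⟩
    exact ⟨s, hs, (Prod.mk.inj hsx).1, (Prod.mk.inj hsx).2⟩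

end UTVPI

theorem stmt_15_general {n : ℕ} (S : Set (Fin n → ℤ)) :
    RepUTVPI S ↔ (CptClosed muOp S ∧ CptClosed medianOp S) := by
  constructor
  · rintro ⟨mR, A, b, hA, h2, rfl⟩
    exact ⟨cptClosed_of_preservesUnitHalfplanes preservesUnitHalfplanes_muOp hA h2 b,
      cptClosed_of_preservesUnitHalfplanes preservesUnitHalfplanes_medianOp hA h2 b⟩
  · rintro ⟨hmu, hmed⟩
    exact repUTVPI_of_forall_exists_le fun x => mem_of_forall_exists_le hmu hmed

/-- `S` is representable by a UTVPI system iff `S` is closed under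
`μ` and the median operation. -/
theorem stmt_15 {n : ℕ} (hn : 2 ≤ n) (S : Set (Fin n → ℤ)) :
    RepUTVPI S ↔ (CptClosed muOp S ∧ CptClosed medianOp S) :=
  stmt_15_general S
end

section
/- For every set S ⊆ ℤ^n, the μ-closure cl_μ(S) of S is contained in the UTVPI closure cl_UTVPI(S) of S. -/
/-!
A UTVPI set is an intersection of half-spaces `±x_i ± x_j ≥ c`, so it suffices that each of them
is `μ`-closed; the `μ`-closure is then contained in every UTVPI superset of `S`. Rounding towards
the first argument makes `μ` odd, `μ(-a,-b) = -μ(a,b)`, which disposes of the signs, and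
superadditive in the form `min (a + c) (b + d) ≤ μ(a,b) + μ(c,d)`, which handles two variables.
(Plain `⌈(a+b)/2⌉` is not odd and plain `⌊(a+b)/2⌋` is not superadditive.)
-/

/-- The two-argument form of `muOp`, rounding `(a + b) / 2` towards its first argument `a`. -/
def dirMid (a b : ℤ) : ℤ :=
  if b ≤ a then ⌈((a + b : ℤ) : ℚ) / 2⌉ else ⌊((a + b : ℤ) : ℚ) / 2⌋

theorem dirMid_eq (a b : ℤ) :
    dirMid a b = if b ≤ a then -(-(a + b) / 2) else (a + b) / 2 := by
  have hceil := Rat.ceil_intCast_div_natCast (a + b) 2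
  have hfloor := Rat.floor_intCast_div_natCast (a + b) 2
  rw [Nat.cast_ofNat] at hceil hfloor
  unfold dirMid
  split
  · exact hceil
  · exact hfloor

theorem min_le_dirMid (a b : ℤ) : min a b ≤ dirMid a b := by
  rw [dirMid_eq]; split <;> omega

theorem dirMid_neg (a b : ℤ) : dirMid (-a) (-b) = -dirMid a b := by
  rw [dirMid_eq, dirMid_eq]; rcases lt_trichotomy a b with h | rfl | h <;> simp_all <;> omega

theorem dirMid_unit_mul {u : ℤ} (hu : u = 0 ∨ u = -1 ∨ u = 1) (a b : ℤ) :
    u * dirMid a b = dirMid (u * a) (u * b) := by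
  rcases hu with rfl | rfl | rfl
  · simp [dirMid_eq]
  · simp [dirMid_neg]
  · simp

theorem min_add_le_dirMid_add (a b c d : ℤ) :
    min (a + c) (b + d) ≤ dirMid a b + dirMid c d := by
  rw [dirMid_eq, dirMid_eq]; split <;> split <;> omega

theorem min_sum_le_sum_dirMid {ι : Type*} {t : Finset ι} (ht : t.card ≤ 2) (x y : ι → ℤ) :
    min (∑ j ∈ t, x j) (∑ j ∈ t, y j) ≤ ∑ j ∈ t, dirMid (x j) (y j) := by
  classical
  interval_cases h : t.card
  · simp [Finset.card_eq_zero.mp h]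
  · obtain ⟨p, rfl⟩ := Finset.card_eq_one.mp h
    simpa using min_le_dirMid (x p) (y p)
  · obtain ⟨p, q, hpq, rfl⟩ := Finset.card_eq_two.mp h
    simpa [Finset.sum_pair hpq] using min_add_le_dirMid_add (x p) (y p) (x q) (y q)

theorem min_le_sum_mul_dirMid {ι : Type*} [Fintype ι] {a : ι → ℤ}
    (hunit : ∀ j, a j = 0 ∨ a j = -1 ∨ a j = 1) (hsupp : {j | a j ≠ 0}.ncard ≤ 2)
    (x y : ι → ℤ) :
    min (∑ j, a j * x j) (∑ j, a j * y j) ≤ ∑ j, a j * dirMid (x j) (y j) := by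
  classical
  set t := Finset.univ.filter fun j => a j ≠ 0
  have hsum : ∀ f : ι → ℤ, ∑ j ∈ t, a j * f j = ∑ j, a j * f j := fun f =>
    Finset.sum_filter_of_ne fun j _ h => left_ne_zero_of_mul h
  have ht : t.card ≤ 2 := by
    rwa [Set.ncard_eq_toFinset_card', Set.toFinset_ofPred] at hsupp
  rw [← hsum x, ← hsum y, ← hsum,
    Finset.sum_congr rfl fun j _ => dirMid_unit_mul (hunit j) (x j) (y j)]
  exact min_sum_le_sum_dirMid ht (fun j => a j * x j) (fun j => a j * y j)

theorem cptClosed_muOp_halfspace {ι : Type*} [Fintype ι] {a : ι → ℤ}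
    (hunit : ∀ j, a j = 0 ∨ a j = -1 ∨ a j = 1) (hsupp : {j | a j ≠ 0}.ncard ≤ 2) (c : ℝ) :
    CptClosed muOp {x : ι → ℤ | c ≤ ((∑ j, a j * x j : ℤ) : ℝ)} := by
  intro xs hxs
  show c ≤ ((∑ j, a j * dirMid (xs 0 j) (xs 1 j) : ℤ) : ℝ)
  calc c ≤ min ((∑ j, a j * xs 0 j : ℤ) : ℝ) ((∑ j, a j * xs 1 j : ℤ) : ℝ) :=
        le_min (hxs 0) (hxs 1)
    _ = ((min (∑ j, a j * xs 0 j) (∑ j, a j * xs 1 j) : ℤ) : ℝ) := (Int.cast_min ..).symm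
    _ ≤ _ := by exact_mod_cast min_le_sum_mul_dirMid hunit hsupp (xs 0) (xs 1)

theorem RepUTVPI.cptClosed_muOp {n : ℕ} {T : Set (Fin n → ℤ)} (hT : RepUTVPI T) :
    CptClosed muOp T := by
  obtain ⟨mR, A, b, hunit, hsupp, rfl⟩ := hT
  intro xs hxs i
  exact cptClosed_muOp_halfspace (hunit i) (hsupp i) (b i) xs fun l => hxs l i

/-- the `μ`-closure of `S` is contained in the UTVPI closure of `S`. -/
theorem stmt_16 {n : ℕ} (S : Set (Fin n → ℤ)) :
    clOp muOp S ⊆ ⋂₀ {T : Set (Fin n → ℤ) | S ⊆ T ∧ RepUTVPI T} :=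
  fun _ hx T ⟨hST, hT⟩ => hx T ⟨hST, hT.cptClosed_muOp⟩
end

section
/- Let S ⊆ ℤ². If S is closed under the directed discrete midpoint operation μ, then S is representable by a UTVPI system. -/
/-!
`S` is the intersection of its supporting UTVPI half-planes. Since `μ` commutes with
translations and with `a ↦ -a`, the images of a `μ`-closed set under translations, reflections
and the coordinate swap are again `μ`-closed, and the restriction of `μ` to a line of slope
`0`, `±1` or `∞` is the one-dimensional `μ`, whose closed sets are intervals by bisection.

The key fact is that `S` contains the octagon spanned by any two of its points. By the
symmetries these points are `0` and `q` with `0 ≤ q₁ ≤ q₀`. Halving with `μ` produces the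
corner `(q₁, q₁)`, by reflection also `(q₀ - q₁, 0)`, and the parallelogram spanned by these
four points is filled in along lines of slopes `1` and `0`.

If `x` satisfies the eight constraints, bisection gives points `U`, `V` of `S` on the vertical
and on the horizontal line through `x`, and a point `W` whose value of `x₀ ± x₁` is within `1`
of that of `x`, on the side opposite to `U` and `V`; then `x` lies in the octagon spanned by
`W` and one of `U`, `V`.
-/

theorem muOp_cons (a b : ℤ) :
    muOp ![a, b] = if b ≤ a then (a + b + 1) / 2 else (a + b) / 2 := by
  have h2 : ((2 : ℕ) : ℚ) = 2 := by norm_num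
  simp only [muOp, Matrix.cons_val_zero, Matrix.cons_val_one, Matrix.cons_val_fin_one]
  split_ifs
  · rw [← h2, Rat.ceil_intCast_div_natCast]; omega
  · rw [← h2, Rat.floor_intCast_div_natCast]; rfl

def muVec {ι : Type*} (p q : ι → ℤ) : ι → ℤ := fun i => muOp ![p i, q i]

@[simp]
theorem muVec_apply {ι : Type*} (p q : ι → ℤ) (i : ι) : muVec p q i = muOp ![p i, q i] := rfl

theorem cptClosed_muOp_iff {ι : Type*} {S : Set (ι → ℤ)} :
    CptClosed muOp S ↔ ∀ p ∈ S, ∀ q ∈ S, muVec p q ∈ S := by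
  constructor
  · intro hS p hp q hq
    convert hS ![p, q] (by simp [Fin.forall_fin_two, hp, hq]) using 2 with i
    exact congrArg muOp (by ext l; fin_cases l <;> rfl)
  · intro hS x hx
    convert hS _ (hx 0) _ (hx 1) using 2 with i
    exact congrArg muOp (by ext l; fin_cases l <;> rfl)

theorem Int.exists_mem_near_of_gap {T : Set ℤ} (g : ℕ)
    (hT : ∀ a ∈ T, ∀ b ∈ T, a + g + 1 < b → ∃ m ∈ T, a < m ∧ m < b)
    {a b t : ℤ} (ha : a ∈ T) (hb : b ∈ T) (hat : a ≤ t) (htb : t ≤ b) :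
    ∃ m ∈ T, t ≤ m ∧ m ≤ t + g := by
  induction h : (b - a).toNat using Nat.strong_induction_on generalizing a b with
  | _ n ih =>
  rcases eq_or_lt_of_le hat with rfl | hat
  · exact ⟨a, ha, le_rfl, by omega⟩
  by_cases hbt : b ≤ t + g
  · exact ⟨b, hb, htb, hbt⟩
  obtain ⟨m, hm, ham, hmb⟩ := hT a ha b hb (by omega)
  rcases le_or_gt t m with htm | hmt
  · exact ih _ (by omega) ha hm hat.le htm rfl
  · exact ih _ (by omega) hm hb hmt.le htb rfl

namespace CptClosed

section General

variable {ι : Type*} {S : Set (ι → ℤ)}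

theorem muVec_mem (hS : CptClosed muOp S) {p q : ι → ℤ} (hp : p ∈ S) (hq : q ∈ S) :
    muVec p q ∈ S :=
  cptClosed_muOp_iff.1 hS p hp q hq

theorem preimage {κ : Type*} (hS : CptClosed muOp S) (φ : (κ → ℤ) → ι → ℤ)
    (hφ : ∀ p q, φ (muVec p q) = muVec (φ p) (φ q)) : CptClosed muOp (φ ⁻¹' S) :=
  cptClosed_muOp_iff.2 fun p hp q hq => by
    simpa only [Set.mem_preimage, hφ] using hS.muVec_mem hp hq

theorem preimage_add (hS : CptClosed muOp S) (c : ι → ℤ) : CptClosed muOp ((· + c) ⁻¹' S) :=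
  hS.preimage _ fun p q => by
    ext i; simp only [Pi.add_apply, muVec_apply, muOp_cons]; split_ifs <;> omega

theorem preimage_sub (hS : CptClosed muOp S) (c : ι → ℤ) : CptClosed muOp ((c - ·) ⁻¹' S) :=
  hS.preimage _ fun p q => by
    ext i; simp only [Pi.sub_apply, muVec_apply, muOp_cons]; split_ifs <;> omega

theorem preimage_mul (hS : CptClosed muOp S) {ε : ι → ℤ} (hε : ∀ i, ε i = 1 ∨ ε i = -1) :
    CptClosed muOp ((ε * ·) ⁻¹' S) :=
  hS.preimage _ fun p q => by
    ext i
    rcases hε i with h | h <;>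
      simp only [Pi.mul_apply, muVec_apply, muOp_cons, h] <;> split_ifs <;> omega

theorem preimage_comp {κ : Type*} (hS : CptClosed muOp S) (σ : ι → κ) :
    CptClosed muOp ((· ∘ σ) ⁻¹' S : Set (κ → ℤ)) :=
  hS.preimage _ fun _ _ => rfl

theorem exists_mem_near (hS : CptClosed muOp S) (ℓ : (ι → ℤ) → ℤ) (g : ℕ)
    (hℓ : ∀ p q, ℓ p + g + 1 < ℓ q → ℓ p < ℓ (muVec p q) ∧ ℓ (muVec p q) < ℓ q)
    {p q : ι → ℤ} {t : ℤ} (hp : p ∈ S) (hq : q ∈ S) (hpt : ℓ p ≤ t) (htq : t ≤ ℓ q) :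
    ∃ s ∈ S, t ≤ ℓ s ∧ ℓ s ≤ t + g := by
  obtain ⟨_, ⟨s, hs, rfl⟩, h⟩ := Int.exists_mem_near_of_gap (T := ℓ '' S) g
    (by
      rintro _ ⟨p, hp, rfl⟩ _ ⟨q, hq, rfl⟩ h
      exact ⟨_, ⟨_, hS.muVec_mem hp hq, rfl⟩, hℓ p q h⟩)
    ⟨p, hp, rfl⟩ ⟨q, hq, rfl⟩ hpt htq
  exact ⟨s, hs, h⟩

theorem exists_mem_apply_eq (hS : CptClosed muOp S) (i : ι) {t : ℤ}
    (hlo : ∃ s ∈ S, s i ≤ t) (hhi : ∃ s ∈ S, t ≤ s i) : ∃ s ∈ S, s i = t := by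
  obtain ⟨p, hp, hpt⟩ := hlo
  obtain ⟨q, hq, htq⟩ := hhi
  obtain ⟨s, hs, h⟩ := hS.exists_mem_near (· i) 0
    (fun p q h => by simp only [muVec_apply, muOp_cons] at h ⊢; split_ifs <;> omega) hp hq hpt htq
  exact ⟨s, hs, by omega⟩

theorem add_smul_mem (hS : CptClosed muOp S) {d : ι → ℤ}
    (hd : ∀ i, d i = -1 ∨ d i = 0 ∨ d i = 1) {p : ι → ℤ} {j k : ℤ}
    (hp : p ∈ S) (hk : p + k • d ∈ S) (hj0 : 0 ≤ j) (hjk : j ≤ k) : p + j • d ∈ S := by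
  set T := {j : ℤ | p + j • d ∈ S}
  have hT : ∀ a ∈ T, ∀ b ∈ T, a + (0 : ℕ) + 1 < b → ∃ m ∈ T, a < m ∧ m < b := by
    intro a ha b hb hab
    refine ⟨muOp ![a, b], ?_, by simp only [muOp_cons]; split_ifs <;> omega⟩
    show p + muOp ![a, b] • d ∈ S
    convert hS.muVec_mem ha hb using 1
    ext i
    rcases hd i with h | h | h <;>
      simp only [Pi.add_apply, Pi.smul_apply, smul_eq_mul, muVec_apply, muOp_cons, h] <;>
      split_ifs <;> omega
  obtain ⟨m, hm, hjm, hmj⟩ :=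
    Int.exists_mem_near_of_gap 0 hT (a := 0) (by simpa [T] using hp) hk hj0 hjk
  obtain rfl : m = j := by omega
  exact hm

end General

variable {S : Set (Fin 2 → ℤ)}

theorem exists_mem_dotProduct_near (hS : CptClosed muOp S)
    {c : Fin 2 → ℤ} (hc : ∀ i, c i = -1 ∨ c i = 0 ∨ c i = 1) {x : Fin 2 → ℤ}
    (hlo : ∃ s ∈ S, c ⬝ᵥ s ≤ c ⬝ᵥ x) (hhi : ∃ s ∈ S, -c ⬝ᵥ s ≤ -c ⬝ᵥ x) :
    ∃ s ∈ S, c ⬝ᵥ x ≤ c ⬝ᵥ s ∧ c ⬝ᵥ s ≤ c ⬝ᵥ x + 1 := by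
  obtain ⟨p, hp, hpx⟩ := hlo
  obtain ⟨q, hq, hqx⟩ := hhi
  rw [neg_dotProduct, neg_dotProduct, neg_le_neg_iff] at hqx
  refine hS.exists_mem_near (c ⬝ᵥ ·) 1 (fun p q h => ?_) hp hq hpx hqx
  simp only [Matrix.vec2_dotProduct, muVec_apply, muOp_cons, Nat.cast_one] at h ⊢
  rcases hc 0 with h0 | h0 | h0 <;> rcases hc 1 with h1 | h1 | h1 <;>
    simp only [h0, h1] at h ⊢ <;> split_ifs <;> omega

/-- Halving: `m = μ(q, 0) = (⌈q₀/2⌉, ⌈q₁/2⌉)` lies in `S`; the corner of the pair `0, m` is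
`c = (m₁, m₁)`, and the corner of the pair `c, q` is `(q₁, q₁)`. -/
theorem corner_mem (hS : CptClosed muOp S) {q : Fin 2 → ℤ} (h0 : 0 ∈ S) (hq : q ∈ S)
    (hq1 : 0 ≤ q 1) (hq10 : q 1 ≤ q 0) : ![q 1, q 1] ∈ S := by
  induction h : (q 0).toNat using Nat.strong_induction_on generalizing S q with
  | _ n ih =>
  rcases eq_or_lt_of_le hq1 with h1 | h1
  · convert h0 using 1; ext i; fin_cases i <;> simp [← h1]
  rcases eq_or_lt_of_le hq10 with h2 | h2
  · convert hq using 1; ext i; fin_cases i <;> simp [h2]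
  set m := muVec q 0
  have hm0 : m 0 = (q 0 + 1) / 2 := by simp [m, muOp_cons]; omega
  have hm1 : m 1 = (q 1 + 1) / 2 := by simp [m, muOp_cons]; omega
  set c : Fin 2 → ℤ := ![m 1, m 1]
  have hc : c ∈ S := ih _ (by omega) hS h0 (hS.muVec_mem hq h0) (by omega) (by omega) rfl
  have hc0 : c 0 = m 1 := rfl
  have hc1 : c 1 = m 1 := rfl
  have := ih _ (by simp only [Pi.sub_apply]; omega) (hS.preimage_add c) (q := q - c)
    (by simpa using hc) (by simpa using hq) (by simp only [Pi.sub_apply]; omega)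
    (by simp only [Pi.sub_apply]; omega) rfl
  rw [Set.mem_preimage] at this
  convert this using 1
  ext i; fin_cases i <;> simp [c]

theorem add_diag_mem (hS : CptClosed muOp S) {p : Fin 2 → ℤ} {j k : ℤ} (hp : p ∈ S)
    (hk : p + ![k, k] ∈ S) (hj0 : 0 ≤ j) (hjk : j ≤ k) : p + ![j, j] ∈ S := by
  simpa using hS.add_smul_mem (d := ![1, 1]) (by decide) hp (by simpa using hk) hj0 hjk

theorem add_row_mem (hS : CptClosed muOp S) {p : Fin 2 → ℤ} {j k : ℤ} (hp : p ∈ S)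
    (hk : p + ![k, 0] ∈ S) (hj0 : 0 ≤ j) (hjk : j ≤ k) : p + ![j, 0] ∈ S := by
  simpa using hS.add_smul_mem (d := ![1, 0]) (by decide) hp (by simpa using hk) hj0 hjk

end CptClosed

/-- The octagon spanned by `p` and `q`: the smallest set defined by UTVPI constraints that
contains both points. -/
def octHull (p q : Fin 2 → ℤ) : Set (Fin 2 → ℤ) :=
  {x | x 0 ∈ Set.uIcc (p 0) (q 0) ∧ x 1 ∈ Set.uIcc (p 1) (q 1) ∧
    x 0 + x 1 ∈ Set.uIcc (p 0 + p 1) (q 0 + q 1) ∧ x 0 - x 1 ∈ Set.uIcc (p 0 - p 1) (q 0 - q 1)}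

theorem mul_mul_cancel_of_sign {ι : Type*} {ε : ι → ℤ} (hε : ∀ i, ε i = 1 ∨ ε i = -1)
    (x : ι → ℤ) : ε * (ε * x) = x := by
  ext i; rcases hε i with h | h <;> simp [h]

theorem mul_mem_octHull_zero {ε q x : Fin 2 → ℤ} (hε : ∀ i, ε i = 1 ∨ ε i = -1)
    (hx : x ∈ octHull 0 q) : ε * x ∈ octHull 0 (ε * q) := by
  rcases hε 0 with h0 | h0 <;> rcases hε 1 with h1 | h1 <;>
    simp [octHull, Set.mem_uIcc, h0, h1] at hx ⊢ <;> omega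

namespace CptClosed

variable {S : Set (Fin 2 → ℤ)}

theorem octHull_zero_subset_of_le (hS : CptClosed muOp S) {q : Fin 2 → ℤ} (h0 : 0 ∈ S)
    (hq : q ∈ S) (hq1 : 0 ≤ q 1) (hq10 : q 1 ≤ q 0) : octHull 0 q ⊆ S := by
  intro x hx
  simp only [octHull, Set.mem_ofPred_eq, Set.mem_uIcc, Pi.zero_apply] at hx
  have corner₁ : ![q 1, q 1] ∈ S := hS.corner_mem h0 hq hq1 hq10
  have corner₂ : ![q 0 - q 1, 0] ∈ S := by
    have := (hS.preimage_sub q).corner_mem (q := q) (by simpa) (by simpa) hq1 hq10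
    rw [Set.mem_preimage] at this
    convert this using 1; ext i; fin_cases i <;> simp
  have left : ![x 1, x 1] ∈ S := by
    simpa using hS.add_diag_mem (j := x 1) (k := q 1) h0 (by simpa using corner₁)
      (by omega) (by omega)
  have right : ![x 1, x 1] + ![q 0 - q 1, 0] ∈ S := by
    have := hS.add_diag_mem (j := x 1) (k := q 1) corner₂
      (by convert hq using 1; ext i; fin_cases i <;> simp) (by omega) (by omega)
    convert this using 1; ext i; fin_cases i <;> simp; ring
  convert hS.add_row_mem (j := x 0 - x 1) left right (by omega) (by omega) using 1
  ext i; fin_cases i <;> simp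

theorem octHull_zero_subset (hS : CptClosed muOp S) {q : Fin 2 → ℤ} (h0 : 0 ∈ S)
    (hq : q ∈ S) : octHull 0 q ⊆ S := by
  wlog hq0 : 0 ≤ q 0 ∧ 0 ≤ q 1 generalizing S q
  · set ε : Fin 2 → ℤ := fun i => if 0 ≤ q i then 1 else -1
    have hε : ∀ i, ε i = 1 ∨ ε i = -1 := fun i => by simp only [ε]; split_ifs <;> simp
    intro x hx
    have := this (hS.preimage_mul hε) (q := ε * q) (by simpa)
      (by simpa [mul_mul_cancel_of_sign hε]) (by simp only [Pi.mul_apply, ε]; split_ifs <;> omega)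
      (mul_mem_octHull_zero hε hx)
    simpa [mul_mul_cancel_of_sign hε] using this
  wlog hq10 : q 1 ≤ q 0 generalizing S q
  · have hσ : ∀ x : Fin 2 → ℤ, (x ∘ ![1, 0]) ∘ ![1, 0] = x := by
      intro x; ext i; fin_cases i <;> rfl
    intro x hx
    have := this (hS.preimage_comp ![1, 0]) (q := q ∘ ![1, 0]) (by simpa) (by simpa [hσ])
      (by simp; omega) (by simp; omega) (a := x ∘ ![1, 0])
      (by simp [octHull, Set.mem_uIcc] at hx ⊢; omega)
    simpa [hσ] using this
  exact hS.octHull_zero_subset_of_le h0 hq hq0.2 hq10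

theorem octHull_subset (hS : CptClosed muOp S) {p q : Fin 2 → ℤ} (hp : p ∈ S) (hq : q ∈ S) :
    octHull p q ⊆ S := by
  intro x hx
  have := (hS.preimage_add p).octHull_zero_subset (q := q - p) (by simpa) (by simpa)
    (a := x - p) (by simp [octHull, Set.mem_uIcc] at hx ⊢; omega)
  simpa using this

end CptClosed

def octDirs : Fin 8 → Fin 2 → ℤ :=
  ![![1, 0], ![-1, 0], ![0, 1], ![0, -1], ![1, 1], ![-1, -1], ![1, -1], ![-1, 1]]

theorem CptClosed.mem_of_forall_exists_dotProduct_le {S : Set (Fin 2 → ℤ)}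
    (hS : CptClosed muOp S) {x : Fin 2 → ℤ}
    (hx : ∀ i, ∃ s ∈ S, octDirs i ⬝ᵥ s ≤ octDirs i ⬝ᵥ x) : x ∈ S := by
  obtain ⟨U, hU, hUx⟩ := hS.exists_mem_apply_eq 0 (t := x 0)
    (by simpa [octDirs, Matrix.vec2_dotProduct, -Matrix.cons_dotProduct] using hx 0)
    (by simpa [octDirs, Matrix.vec2_dotProduct, -Matrix.cons_dotProduct] using hx 1)
  obtain ⟨V, hV, hVx⟩ := hS.exists_mem_apply_eq 1 (t := x 1)
    (by simpa [octDirs, Matrix.vec2_dotProduct, -Matrix.cons_dotProduct] using hx 2)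
    (by simpa [octDirs, Matrix.vec2_dotProduct, -Matrix.cons_dotProduct] using hx 3)
  have near : ∀ i, ∃ W ∈ S,
      octDirs i ⬝ᵥ x ≤ octDirs i ⬝ᵥ W ∧ octDirs i ⬝ᵥ W ≤ octDirs i ⬝ᵥ x + 1 := by
    have hunit : ∀ i j, octDirs i j = -1 ∨ octDirs i j = 0 ∨ octDirs i j = 1 := by decide
    have hneg : ∀ i, ∃ j, octDirs j = -octDirs i := by decide
    intro i
    obtain ⟨j, hj⟩ := hneg i
    exact hS.exists_mem_dotProduct_near (hunit i) (hx i) (hj ▸ hx j)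
  rcases eq_or_ne (U 1) (x 1) with hU1 | hU1
  · convert hU using 1; ext i; fin_cases i <;> simp [hUx, hU1]
  rcases eq_or_ne (V 0) (x 0) with hV0 | hV0
  · convert hV using 1; ext i; fin_cases i <;> simp [hVx, hV0]
  obtain ⟨W, hW, h₁, h₂⟩ :=
    near (if U 1 < x 1 then if V 0 < x 0 then 4 else 7 else if V 0 < x 0 then 6 else 5)
  have hxW : x ∈ octHull U W ∨ x ∈ octHull V W := by
    split_ifs at h₁ h₂ <;>
      simp [octDirs, octHull, Set.mem_uIcc, Matrix.vec2_dotProduct, -Matrix.cons_dotProduct]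
        at h₁ h₂ ⊢ <;>
      omega
  exact hxW.elim (hS.octHull_subset hU hW ·) (hS.octHull_subset hV hW ·)

/-- The zero row with `β = 1` or `β = 0` encodes the constraint that fails, resp. holds,
everywhere: it is used when `S` is empty, resp. when `r ⬝ᵥ ·` is unbounded below on `S`. -/
theorem exists_halfspace_iff_exists_le {ι : Type*} [Fintype ι] (S : Set (ι → ℤ)) (r : ι → ℤ) :
    ∃ (r' : ι → ℤ) (β : ℝ), (r' = r ∨ r' = 0) ∧
      ∀ x, β ≤ ((r' ⬝ᵥ x : ℤ) : ℝ) ↔ ∃ s ∈ S, r ⬝ᵥ s ≤ r ⬝ᵥ x := by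
  by_cases hmin : ∃ s₀ ∈ S, ∀ s ∈ S, r ⬝ᵥ s₀ ≤ r ⬝ᵥ s
  · obtain ⟨s₀, hs₀, hmin⟩ := hmin
    refine ⟨r, ((r ⬝ᵥ s₀ : ℤ) : ℝ), Or.inl rfl, fun x => ?_⟩
    rw [Int.cast_le]
    exact ⟨fun h => ⟨s₀, hs₀, h⟩, fun ⟨s, hs, h⟩ => (hmin s hs).trans h⟩
  rcases S.eq_empty_or_nonempty with rfl | ⟨s₁, hs₁⟩
  · exact ⟨0, 1, Or.inr rfl, fun x => by simp⟩
  refine ⟨0, 0, Or.inr rfl, fun x => ?_⟩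
  simp only [zero_dotProduct, Int.cast_zero, le_refl, true_iff]
  by_contra! hx
  obtain ⟨_, ⟨s₀, hs₀, rfl⟩, hleast⟩ := Int.exists_least_of_bdd (P := fun t => ∃ s ∈ S, r ⬝ᵥ s = t)
    ⟨r ⬝ᵥ x, fun _ ⟨s, hs, hst⟩ => hst ▸ (hx s hs).le⟩ ⟨_, s₁, hs₁, rfl⟩
  exact hmin ⟨s₀, hs₀, fun s hs => hleast _ ⟨s, hs, rfl⟩⟩

theorem repUTVPI_of_eq_setOf {n k : ℕ} {S : Set (Fin n → ℤ)} (r : Fin k → Fin n → ℤ)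
    (hunit : ∀ i j, r i j = 0 ∨ r i j = -1 ∨ r i j = 1) (hsupp : ∀ i, {j | r i j ≠ 0}.ncard ≤ 2)
    (hS : S = {x | ∀ i, ∃ s ∈ S, r i ⬝ᵥ s ≤ r i ⬝ᵥ x}) : RepUTVPI S := by
  choose r' β hr' hβ using fun i => exists_halfspace_iff_exists_le S (r i)
  refine ⟨k, Matrix.of r', β, fun i j => ?_, fun i => ?_,
    hS.trans (Set.ext fun x => forall_congr' fun i => (hβ i x).symm)⟩
  · rcases hr' i with h | h <;> simp [h, hunit]
  · rcases hr' i with h | h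
    · simpa [h] using hsupp i
    · simp [h]

/-- a `μ`-closed subset of `ℤ²` is representable by a UTVPI system. -/
theorem stmt_17 (S : Set (Fin 2 → ℤ)) (h : CptClosed muOp S) :
    RepUTVPI S :=
  repUTVPI_of_eq_setOf octDirs (by decide) (fun _ => (Set.ncard_le_card _).trans (by simp))
    (Set.ext fun x => ⟨fun hx _ => ⟨x, hx, le_rfl⟩, h.mem_of_forall_exists_dotProduct_le⟩)
end

section
/- Let n ≥ 2 and S ⊆ ℤ^n. Consider the properties: (i) S is closed under some majority operation; (ii) there exist majority operations f_1, …, f_n such that for all x, y, z ∈ S the vector whose i-th coordinate is f_i(x_i, y_i, z_i) belongs to S; (iii) S is strongly closed under the partial majority operation maj_p; (iv) S is 2-decomposable; (v) S is weakly closed under maj_p. For each property, its hereditary version requires that for every subset I ⊆ {1,…,n} with |I| ≥ 2, the projection π_I(S) ⊆ ℤ^I satisfies the property (with, in (ii), majority operations associated with the coordinates in I). Then (i) ⇒ (ii) ⇒ (iii) ⇒ (iv) ⇒ (v); moreover (i) is equivalent to its hereditary version, (ii) is equivalent to its hereditary version, and the hereditary versions of (iii), (iv), (v) are all equivalent to (iii).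 -/
/-- The value of the partial majority operation `maj_p` at `(a,b,c)` (meaningful
whenever at least two of the arguments coincide). -/
def majVal (a b c : ℤ) : ℤ := if a = b then a else if a = c then a else b

/-- The domain condition of the partial majority operation `maj_p`. -/
def majDom (a b c : ℤ) : Prop := a = b ∨ a = c ∨ b = c

/-- (ii): there are majority operations `f_i`, one for each coordinate, such that `S`
is closed under their componentwise application. -/
def CoordMajClosed {ι : Type*} (S : Set (ι → ℤ)) : Prop :=
  ∃ f : ι → (Fin 3 → ℤ) → ℤ, (∀ i, IsMajorityOp (f i)) ∧
    ∀ x ∈ S, ∀ y ∈ S, ∀ z ∈ S, (fun i => f i ![x i, y i, z i]) ∈ S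

/-- (iii): `S` is strongly closed under the partial majority operation `maj_p`. -/
def StronglyMajPClosed {ι : Type*} (S : Set (ι → ℤ)) : Prop :=
  ∀ x ∈ S, ∀ y ∈ S, ∀ z ∈ S, ∃ w ∈ S, ∀ i,
    majDom (x i) (y i) (z i) → w i = majVal (x i) (y i) (z i)

/-- (v): `S` is weakly closed under the partial majority operation `maj_p`. -/
def WeaklyMajPClosed {ι : Type*} (S : Set (ι → ℤ)) : Prop :=
  ∀ x ∈ S, ∀ y ∈ S, ∀ z ∈ S, (∀ i, majDom (x i) (y i) (z i)) →
    (fun i => majVal (x i) (y i) (z i)) ∈ S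

/-- The projection `π_I(S) ⊆ ℤ^I` of `S ⊆ ℤ^n` onto a set `I` of coordinates. -/
def projOn {n : ℕ} (I : Finset (Fin n)) (S : Set (Fin n → ℤ)) : Set (↥I → ℤ) :=
  (fun x (i : ↥I) => x i.1) '' S

/-!
A majority operation agrees with `maj_p` wherever `maj_p` is defined, which gives (i) ⇒ (ii) ⇒ (iii).
For (iii) ⇒ (iv), a vector `x` whose pairwise projections lie in those of `S` is matched by an
element of `S` on ever larger coordinate sets `J`: if `s₁, s₂, s₃ ∈ S` match `x` on `J` except at
three distinct coordinates `i, j, k` respectively, then at every coordinate of `J` two of them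
agree with `x`, so a strong `maj_p`-image of them matches `x` on all of `J`. For (iv) ⇒ (v), the
value of `maj_p` at each coordinate is attained by two of the three arguments, so for any two
coordinates one argument attains both. Conversely, strong closure of `S` follows from weak closure
of the projection onto the coordinates where `maj_p` is defined, unless there is at most one such
coordinate, where one of the arguments itself will do.
-/

section Majority

variable {ι κ : Type*}

lemma majDom_and_majVal_eq_of_two_eq {a b c v : ℤ}
    (h : (a = v ∧ b = v) ∨ (a = v ∧ c = v) ∨ (b = v ∧ c = v)) :
    majDom a b c ∧ majVal a b c = v := by
  unfold majDom majVal; split_ifs <;> omega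

lemma majVal_eq_two_of_majDom {a b c : ℤ} (h : majDom a b c) :
    (a = majVal a b c ∧ b = majVal a b c) ∨ (a = majVal a b c ∧ c = majVal a b c) ∨
      (b = majVal a b c ∧ c = majVal a b c) := by
  unfold majDom at h; unfold majVal; split_ifs <;> omega

lemma majVal_eq_left_or_eq_middle (a b c : ℤ) : majVal a b c = a ∨ majVal a b c = b := by
  unfold majVal; split_ifs <;> simp

lemma IsMajorityOp.apply_eq_majVal {f : (Fin 3 → ℤ) → ℤ} (hf : IsMajorityOp f) {a b c : ℤ}
    (h : majDom a b c) : f ![a, b, c] = majVal a b c := by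
  rcases h with rfl | rfl | rfl
  · rw [(hf a c).1]; simp [majVal]
  · rw [(hf a b).2.1]; simp [majVal]
  · rw [(hf b a).2.2]; unfold majVal; split_ifs <;> omega

lemma MajClosed.coordMajClosed {S : Set (ι → ℤ)} (h : MajClosed S) : CoordMajClosed S := by
  obtain ⟨f, hf, hcl⟩ := h
  refine ⟨fun _ => f, fun _ => hf, fun x hx y hy z hz => ?_⟩
  convert hcl ![x, y, z] (Fin.forall_fin_succ.mpr ⟨hx, Fin.forall_fin_two.mpr ⟨hy, hz⟩⟩) using 3
  ext l; fin_cases l <;> rfl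

lemma CoordMajClosed.stronglyMajPClosed {S : Set (ι → ℤ)} (h : CoordMajClosed S) :
    StronglyMajPClosed S := by
  obtain ⟨f, hf, hcl⟩ := h
  exact fun x hx y hy z hz => ⟨_, hcl x hx y hy z hz, fun i hi => (hf i).apply_eq_majVal hi⟩

lemma MajClosed.image_comp {S : Set (ι → ℤ)} (h : MajClosed S) (σ : κ → ι) :
    MajClosed ((· ∘ σ) '' S) := by
  obtain ⟨f, hf, hcl⟩ := h
  refine ⟨f, hf, fun x hx => ?_⟩
  choose s hs hsx using hx
  exact ⟨_, hcl s hs, by simp [← hsx]; rfl⟩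

lemma CoordMajClosed.image_comp {S : Set (ι → ℤ)} (h : CoordMajClosed S) (σ : κ → ι) :
    CoordMajClosed ((· ∘ σ) '' S) := by
  obtain ⟨f, hf, hcl⟩ := h
  refine ⟨fun k => f (σ k), fun k => hf (σ k), ?_⟩
  rintro _ ⟨x, hx, rfl⟩ _ ⟨y, hy, rfl⟩ _ ⟨z, hz, rfl⟩
  exact ⟨_, hcl x hx y hy z hz, rfl⟩

lemma StronglyMajPClosed.image_comp {S : Set (ι → ℤ)} (h : StronglyMajPClosed S) (σ : κ → ι) :
    StronglyMajPClosed ((· ∘ σ) '' S) := by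
  rintro _ ⟨x, hx, rfl⟩ _ ⟨y, hy, rfl⟩ _ ⟨z, hz, rfl⟩
  obtain ⟨w, hw, hwx⟩ := h x hx y hy z hz
  exact ⟨w ∘ σ, ⟨w, hw, rfl⟩, fun k => hwx (σ k)⟩

end Majority

section Decomposition

variable {ι : Type*} {S : Set (ι → ℤ)}

lemma StronglyMajPClosed.exists_eqOn_of_eqOn_erase [DecidableEq ι] (h : StronglyMajPClosed S)
    {x : ι → ℤ} {J : Finset ι} {i j k : ι} (hij : i ≠ j) (hik : i ≠ k) (hjk : j ≠ k)
    {s₁ s₂ s₃ : ι → ℤ} (hs₁ : s₁ ∈ S) (hs₂ : s₂ ∈ S) (hs₃ : s₃ ∈ S)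
    (e₁ : Set.EqOn s₁ x ↑(J.erase i)) (e₂ : Set.EqOn s₂ x ↑(J.erase j))
    (e₃ : Set.EqOn s₃ x ↑(J.erase k)) :
    ∃ w ∈ S, Set.EqOn w x J := by
  obtain ⟨w, hw, hwmaj⟩ := h s₁ hs₁ s₂ hs₂ s₃ hs₃
  refine ⟨w, hw, fun l hl => ?_⟩
  have hl' : ∀ m, l ≠ m → l ∈ (↑(J.erase m) : Set ι) := fun m hlm =>
    Finset.mem_erase.mpr ⟨hlm, hl⟩
  have two : (s₁ l = x l ∧ s₂ l = x l) ∨ (s₁ l = x l ∧ s₃ l = x l) ∨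
      (s₂ l = x l ∧ s₃ l = x l) := by
    by_cases hli : l = i
    · subst hli; exact .inr (.inr ⟨e₂ (hl' j hij), e₃ (hl' k hik)⟩)
    by_cases hlj : l = j
    · subst hlj; exact .inr (.inl ⟨e₁ (hl' i hli), e₃ (hl' k hjk)⟩)
    · exact .inl ⟨e₁ (hl' i hli), e₂ (hl' j hlj)⟩
  obtain ⟨hdom, hval⟩ := majDom_and_majVal_eq_of_two_eq two
  rw [hwmaj l hdom, hval]

lemma StronglyMajPClosed.exists_eqOn (h : StronglyMajPClosed S) {x : ι → ℤ}
    (hx : ∀ i j, i ≠ j → ∃ s ∈ S, s i = x i ∧ s j = x j) (J : Finset ι) (hJ : 2 ≤ J.card) :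
    ∃ s ∈ S, Set.EqOn s x J := by
  classical
  induction J using Finset.strongInduction with
  | H J ih =>
  rcases hJ.eq_or_lt with hJ2 | hJ3
  · obtain ⟨a, b, hab, rfl⟩ := Finset.card_eq_two.mp hJ2.symm
    obtain ⟨s, hs, ha, hb⟩ := hx a b hab
    exact ⟨s, hs, by simp [Set.EqOn, ha, hb]⟩
  · obtain ⟨i, hi, j, hj, k, hk, hij, hik, hjk⟩ := Finset.two_lt_card.mp hJ3
    have erase (m : ι) (hm : m ∈ J) : ∃ s ∈ S, Set.EqOn s x ↑(J.erase m) :=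
      ih _ (Finset.erase_ssubset hm) (by rw [Finset.card_erase_of_mem hm]; omega)
    obtain ⟨s₁, hs₁, e₁⟩ := erase i hi
    obtain ⟨s₂, hs₂, e₂⟩ := erase j hj
    obtain ⟨s₃, hs₃, e₃⟩ := erase k hk
    exact h.exists_eqOn_of_eqOn_erase hij hik hjk hs₁ hs₂ hs₃ e₁ e₂ e₃

lemma StronglyMajPClosed.twoDecomposable [LinearOrder ι] [Fintype ι] [Nontrivial ι]
    (h : StronglyMajPClosed S) : TwoDecomposable S := by
  refine Set.Subset.antisymm (fun x hx i j _ => ⟨x, hx, rfl, rfl⟩) fun x hx => ?_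
  have hx' : ∀ i j, i ≠ j → ∃ s ∈ S, s i = x i ∧ s j = x j := by
    intro i j hij
    rcases hij.lt_or_gt with hlt | hlt
    · exact hx i j hlt
    · obtain ⟨s, hs, hj, hi⟩ := hx j i hlt
      exact ⟨s, hs, hi, hj⟩
  obtain ⟨s, hs, hsx⟩ := h.exists_eqOn hx' Finset.univ Fintype.one_lt_card
  rwa [show s = x from funext fun i => hsx (Finset.mem_coe.mpr (Finset.mem_univ i))] at hs

lemma TwoDecomposable.weaklyMajPClosed [LinearOrder ι] (h : TwoDecomposable S) :
    WeaklyMajPClosed S := by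
  intro x hx y hy z hz hdom
  rw [h]
  intro i j _
  rcases majVal_eq_two_of_majDom (hdom i) with ⟨hi, hi'⟩ | ⟨hi, hi'⟩ | ⟨hi, hi'⟩ <;>
    rcases majVal_eq_two_of_majDom (hdom j) with ⟨hj, hj'⟩ | ⟨hj, hj'⟩ | ⟨hj, hj'⟩ <;>
    first
      | exact ⟨x, hx, by assumption, by assumption⟩
      | exact ⟨y, hy, by assumption, by assumption⟩
      | exact ⟨z, hz, by assumption, by assumption⟩

end Decomposition

lemma exists_eq_majVal_of_subsingleton_majDom {ι : Type*} {S : Set (ι → ℤ)} {x y z : ι → ℤ}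
    (hx : x ∈ S) (hy : y ∈ S)
    (hdom : ∀ i j, majDom (x i) (y i) (z i) → majDom (x j) (y j) (z j) → i = j) :
    ∃ w ∈ S, ∀ i, majDom (x i) (y i) (z i) → w i = majVal (x i) (y i) (z i) := by
  by_cases hi₀ : ∃ i₀, majDom (x i₀) (y i₀) (z i₀)
  · obtain ⟨i₀, hi₀⟩ := hi₀
    have key {w : ι → ℤ} (hw : majVal (x i₀) (y i₀) (z i₀) = w i₀) :
        ∀ i, majDom (x i) (y i) (z i) → w i = majVal (x i) (y i) (z i) := fun i hi => by
      rw [hdom i i₀ hi hi₀, hw]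
    rcases majVal_eq_left_or_eq_middle (x i₀) (y i₀) (z i₀) with hv | hv
    exacts [⟨x, hx, key hv⟩, ⟨y, hy, key hv⟩]
  · exact ⟨x, hx, fun i hi => absurd ⟨i, hi⟩ hi₀⟩

lemma stronglyMajPClosed_of_forall_weaklyMajPClosed_projOn {n : ℕ} {S : Set (Fin n → ℤ)}
    (h : ∀ I : Finset (Fin n), 2 ≤ I.card → WeaklyMajPClosed (projOn I S)) :
    StronglyMajPClosed S := by
  classical
  intro x hx y hy z hz
  set D := Finset.univ.filter fun i => majDom (x i) (y i) (z i)
  have hD {i} (hi : majDom (x i) (y i) (z i)) : i ∈ D := by simpa [D] using hi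
  by_cases hD2 : 2 ≤ D.card
  · obtain ⟨w, hw, hwD⟩ := h D hD2 _ ⟨x, hx, rfl⟩ _ ⟨y, hy, rfl⟩ _ ⟨z, hz, rfl⟩
      fun i => (Finset.mem_filter.mp i.2).2
    exact ⟨w, hw, fun i hi => congrFun hwD ⟨i, hD hi⟩⟩
  · exact exists_eq_majVal_of_subsingleton_majDom hx hy fun i j hi hj =>
      Finset.card_le_one.mp (by omega) i (hD hi) j (hD hj)

lemma image_comp_projOn_univ {n : ℕ} (S : Set (Fin n → ℤ)) :
    (· ∘ fun i => ⟨i, Finset.mem_univ i⟩) '' projOn Finset.univ S = S := by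
  simp only [projOn, Set.image_image]
  exact Set.image_id S

/-- the chain (i) ⇒ (ii) ⇒ (iii) ⇒ (iv) ⇒ (v), (i) and (ii) are
equivalent to their hereditary versions, and the hereditary versions of (iii),
(iv), (v) are all equivalent to (iii). -/
theorem stmt_18 {n : ℕ} (hn : 2 ≤ n) (S : Set (Fin n → ℤ)) :
    (MajClosed S → CoordMajClosed S) ∧
    (CoordMajClosed S → StronglyMajPClosed S) ∧
    (StronglyMajPClosed S → TwoDecomposable S) ∧
    (TwoDecomposable S → WeaklyMajPClosed S) ∧
    (MajClosed S ↔
      ∀ I : Finset (Fin n), 2 ≤ I.card → MajClosed (projOn I S)) ∧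
    (CoordMajClosed S ↔
      ∀ I : Finset (Fin n), 2 ≤ I.card → CoordMajClosed (projOn I S)) ∧
    ((∀ I : Finset (Fin n), 2 ≤ I.card → StronglyMajPClosed (projOn I S)) ↔
      StronglyMajPClosed S) ∧
    ((∀ I : Finset (Fin n), 2 ≤ I.card → TwoDecomposable (projOn I S)) ↔
      StronglyMajPClosed S) ∧
    ((∀ I : Finset (Fin n), 2 ≤ I.card → WeaklyMajPClosed (projOn I S)) ↔
      StronglyMajPClosed S) := by
  have : Nontrivial (Fin n) := Fin.nontrivial_iff_two_le.mpr hn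
  have hI (I : Finset (Fin n)) (hI : 2 ≤ I.card) : Nontrivial I :=
    Fintype.one_lt_card_iff_nontrivial.mp (by rw [Fintype.card_coe]; omega)
  have huniv : 2 ≤ (Finset.univ : Finset (Fin n)).card := by simpa using hn
  have hS := image_comp_projOn_univ S
  have strong_proj (h : StronglyMajPClosed S) (I : Finset (Fin n)) (hI2 : 2 ≤ I.card) :
      TwoDecomposable (projOn I S) :=
    have := hI I hI2
    (h.image_comp Subtype.val).twoDecomposable
  refine ⟨MajClosed.coordMajClosed, CoordMajClosed.stronglyMajPClosed,
    StronglyMajPClosed.twoDecomposable, TwoDecomposable.weaklyMajPClosed,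
    ⟨fun h I _ => h.image_comp Subtype.val, fun h => hS ▸ (h _ huniv).image_comp _⟩,
    ⟨fun h I _ => h.image_comp Subtype.val, fun h => hS ▸ (h _ huniv).image_comp _⟩,
    ⟨fun h => hS ▸ (h _ huniv).image_comp _, fun h I _ => h.image_comp Subtype.val⟩,
    ⟨fun h => stronglyMajPClosed_of_forall_weaklyMajPClosed_projOn fun I hI2 =>
      (h I hI2).weaklyMajPClosed, strong_proj⟩,
    ⟨stronglyMajPClosed_of_forall_weaklyMajPClosed_projOn, fun h I hI2 =>
      (strong_proj h I hI2).weaklyMajPClosed⟩⟩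
end

section
/- Let n ≥ 2 and S ⊆ ℤ^n. Then S is 2-decomposable if and only if, for every integer k ≥ 2, S is weakly closed under the partial operation f^(k); that is, for every family (x^e)_{e ∈ T_k} of elements of S such that for each coordinate i ∈ {1,…,n} the tuple (x^e_i)_{e ∈ T_k} lies in dom(f^(k)), the vector whose i-th coordinate is f^(k)((x^e_i)_{e ∈ T_k}) belongs to S. -/
/-
If `S` is 2-decomposable and the coordinate tuples of a family `(x^e)` lie in the domain of
`f^(k)`, with stars at `ℓ_i` and `ℓ_j` in coordinates `i` and `j`, then the edge `{ℓ_i, ℓ_j}`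
(or any edge at `ℓ_i` if the two coincide) gives a point of `S` agreeing with the output `y`
in coordinates `i` and `j`; hence `y` lies in the join, which is `S`. Conversely, for `k = n`
choose for each pair `e = {i, j}` a point of `S` agreeing with a join element `y` on `e`: in
coordinate `i` the star at `i` is constant with value `y i`, so closure under `f^(n)` gives `y ∈ S`.
-/

section

variable {ι κ : Type*}

theorem twoDecomposable_iff_join_subset [LinearOrder ι] {S : Set (ι → ℤ)} :
    TwoDecomposable S ↔
      ∀ y : ι → ℤ, (∀ i j, i < j → ∃ s ∈ S, s i = y i ∧ s j = y j) → y ∈ S := by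
  refine ⟨fun hS y hy => hS ▸ hy, fun h => Set.Subset.antisymm ?_ h⟩
  exact fun s hs _ _ _ => ⟨s, hs, rfl, rfl⟩

variable [DecidableEq κ]

/-- `t ∈ dom f^(κ)` and `f^(κ)(t) = d`: `t` is constantly `d` on the edges at some vertex. -/
def StarConst (t : {e : Finset κ // e.card = 2} → ℤ) (d : ℤ) : Prop :=
  ∃ ℓ : κ, ∀ m : κ, (hm : m ≠ ℓ) → t ⟨{ℓ, m}, Finset.card_pair (Ne.symm hm)⟩ = d

/-- `S` is weakly closed under the partial operation `f^(κ)`, applied coordinatewise. -/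
def WeaklyClosedStar (κ : Type*) [DecidableEq κ] (S : Set (ι → ℤ)) : Prop :=
  ∀ x : {e : Finset κ // e.card = 2} → ι → ℤ, (∀ e, x e ∈ S) →
    ∀ y : ι → ℤ, (∀ i, StarConst (fun e => x e i) (y i)) → y ∈ S

theorem StarConst.exists_edge [Nontrivial κ] {s t : {e : Finset κ // e.card = 2} → ℤ}
    {a b : ℤ} (hs : StarConst s a) (ht : StarConst t b) : ∃ e, s e = a ∧ t e = b := by
  obtain ⟨ℓ, hℓ⟩ := hs
  obtain ⟨ℓ', hℓ'⟩ := ht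
  by_cases h : ℓ = ℓ'
  · subst h
    obtain ⟨m, hm⟩ := exists_ne ℓ
    exact ⟨_, hℓ m hm, hℓ' m hm⟩
  · refine ⟨_, hℓ ℓ' (Ne.symm h), ?_⟩
    convert hℓ' ℓ h using 3
    exact Finset.pair_comm _ _

theorem TwoDecomposable.weaklyClosedStar [LinearOrder ι] [Nontrivial κ] {S : Set (ι → ℤ)}
    (hS : TwoDecomposable S) : WeaklyClosedStar κ S := by
  intro x hx y hy
  refine twoDecomposable_iff_join_subset.mp hS y fun i j _ => ?_
  obtain ⟨e, hi, hj⟩ := (hy i).exists_edge (hy j)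
  exact ⟨x e, hx e, hi, hj⟩

theorem exists_mem_eqOn_pair [LinearOrder ι] {S : Set (ι → ℤ)} {y : ι → ℤ}
    (hy : ∀ i j, i < j → ∃ s ∈ S, s i = y i ∧ s j = y j) (e : {e : Finset ι // e.card = 2}) :
    ∃ s ∈ S, ∀ i ∈ e.1, s i = y i := by
  obtain ⟨a, b, hab, he⟩ := Finset.card_eq_two.mp e.2
  obtain ⟨s, hs, hsa, hsb⟩ : ∃ s ∈ S, s a = y a ∧ s b = y b := by
    rcases hab.lt_or_gt with hlt | hlt
    · exact hy a b hlt
    · obtain ⟨s, hs, hb, ha⟩ := hy b a hlt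
      exact ⟨s, hs, ha, hb⟩
  refine ⟨s, hs, fun i hi => ?_⟩
  rw [he, Finset.mem_insert, Finset.mem_singleton] at hi
  rcases hi with rfl | rfl <;> assumption

theorem twoDecomposable_of_weaklyClosedStar [LinearOrder ι] {S : Set (ι → ℤ)}
    (hS : WeaklyClosedStar ι S) : TwoDecomposable S := by
  refine twoDecomposable_iff_join_subset.mpr fun y hy => ?_
  choose x hxS hxy using exists_mem_eqOn_pair hy
  exact hS x hxS y fun i => ⟨i, fun m _ => hxy _ i (Finset.mem_insert_self i {m})⟩

end

/-- `S` is 2-decomposable iff, for every `k ≥ 2`, `S` is weakly closed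
under the partial operation `f^(k)` whose arguments are indexed by the 2-element
subsets of `{1,…,k}`: for every family `(x^e)_{e ∈ T_k}` of elements of `S` such
that every coordinate tuple lies in the domain of `f^(k)` (with value `y i` at
coordinate `i`), the vector `y` belongs to `S`. -/
theorem stmt_19 {n : ℕ} (hn : 2 ≤ n) (S : Set (Fin n → ℤ)) :
    TwoDecomposable S ↔
      ∀ k : ℕ, 2 ≤ k →
        ∀ x : {e : Finset (Fin k) // e.card = 2} → (Fin n → ℤ),
          (∀ e, x e ∈ S) →
          ∀ y : Fin n → ℤ,
            (∀ i : Fin n, ∃ ℓ : Fin k, ∀ m : Fin k, (hm : m ≠ ℓ) →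
              x ⟨{ℓ, m}, Finset.card_pair (Ne.symm hm)⟩ i = y i) →
            y ∈ S := by
  refine ⟨fun hS k hk => ?_, fun h => twoDecomposable_of_weaklyClosedStar (h n hn)⟩
  have : Nontrivial (Fin k) := Fin.nontrivial_iff_two_le.mpr hk
  exact hS.weaklyClosedStar
end
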